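/- arXiv:2009.10572 — 5 statements merged into one kernel-verified Lean document; each statement's English description precedes it below -/
import Mathlib

section
/- Let e ≥ 0 be an integer and let x : ℕ → Ω satisfy: for every k ≥ 1, x k lies in GF(2, 2·3^k); and for every k ≥ 2, (x k)³ + (x k) + (x(k-1))^(2^e) = 0 and x k does not lie in GF(2, 2·3^(k-1)) (so the recursion defines an infinite tower of fields). Let n ≥ 2 and let p be a prime dividing 2^(2·3^(n-1)) − 1. Suppose x(n-1) ≠ 0 and there is no y ∈ Ω lying in GF(2, 2·3^(n-1)) with y^p = x(n-1). Then for every j ≥ n, there is no y ∈ Ω lying in GF(2, 2·3^j) with y^p = x j (i.e., x j is not a p-th power in the multiplicative group of GF(2, 2·3^j)). -/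
/-!
Write `M = 2·3^(k-1)` and `σ = (·) ^ 2 ^ M`, which generates `Gal(GF(2, 3M) / GF(2, M))`.
Since `x k ∉ GF(2, M)`, its conjugates `x k, σ (x k), σ² (x k)` are the three distinct roots
of `X³ + X + x(k-1)^(2^e)`, so the norm of `x k` is `x(k-1)^(2^e)`. If `x k = y ^ p` with
`y ∈ GF(2, 3M)`, the norm of `y` is then a `p`-th root of `x(k-1)^(2^e)` in `GF(2, M)`, and
since Frobenius is bijective on `GF(2, M)`, `x(k-1)` is a `p`-th power there as well.
Descending from `j` to `n - 1` contradicts the hypothesis.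
-/

noncomputable abbrev Ω : Type := AlgebraicClosure (ZMod 2)

/-- `z` lies in the subfield `GF(2, m)` of the algebraic closure of `ZMod 2`. -/
def LiesIn (m : ℕ) (z : Ω) : Prop := z ^ (2 ^ m) = z

theorem mul_mul_eq_neg_of_cubic_roots {F : Type*} [Field F] {a b d c : F}
    (ha : a ^ 3 + a + c = 0) (hb : b ^ 3 + b + c = 0) (hd : d ^ 3 + d + c = 0)
    (hab : a ≠ b) (had : a ≠ d) (hbd : b ≠ d) : a * b * d = -c := by
  have hsq_ab : a ^ 2 + a * b + b ^ 2 + 1 = 0 :=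
    (mul_eq_zero.mp (by linear_combination ha - hb :
      (a - b) * (a ^ 2 + a * b + b ^ 2 + 1) = 0)).resolve_left (sub_ne_zero.mpr hab)
  have hsq_ad : a ^ 2 + a * d + d ^ 2 + 1 = 0 :=
    (mul_eq_zero.mp (by linear_combination ha - hd :
      (a - d) * (a ^ 2 + a * d + d ^ 2 + 1) = 0)).resolve_left (sub_ne_zero.mpr had)
  have hsum : a + b + d = 0 :=
    (mul_eq_zero.mp (by linear_combination hsq_ab - hsq_ad :
      (b - d) * (a + b + d) = 0)).resolve_left (sub_ne_zero.mpr hbd)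
  linear_combination (a * b) * hsum - a * hsq_ab + ha

-- The orbit of `a` under `σ` consists of three distinct roots of `X^3 + X + c`.
theorem mul_map_mul_map_map_eq_neg {F : Type*} [Field F] (σ : F →+* F) {a c : F}
    (ha : a ^ 3 + a + c = 0) (hc : σ c = c) (hσ3 : σ (σ (σ a)) = a) (hσ1 : σ a ≠ a) :
    a * σ a * σ (σ a) = -c := by
  have hroot : ∀ u, u ^ 3 + u + c = 0 → σ u ^ 3 + σ u + c = 0 := fun u hu => by
    rw [← hc, ← map_pow, ← map_add, ← map_add, hu, map_zero]
  have hσ2 : σ (σ a) ≠ a := fun h => hσ1 (by simpa only [h] using hσ3)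
  exact mul_mul_eq_neg_of_cubic_roots ha (hroot _ ha) (hroot _ (hroot _ ha)) hσ1.symm hσ2.symm
    fun h => hσ2 ((congrArg σ h).trans hσ3)

theorem liesIn_iff_iterateFrobenius (m : ℕ) (z : Ω) :
    LiesIn m z ↔ iterateFrobenius Ω 2 m z = z :=
  Iff.rfl

theorem LiesIn.mul_right {M : ℕ} {z : Ω} (hz : LiesIn M z) (t : ℕ) : LiesIn (M * t) z := by
  rw [liesIn_iff_iterateFrobenius, iterateFrobenius_mul_apply]
  exact Function.iterate_fixed hz t

theorem LiesIn.exists_pow_eq_of_two_pow_pow_eq {M e p : ℕ} (hM : M ≠ 0) {b z : Ω}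
    (hb : LiesIn M b) (hz : LiesIn M z) (hzb : z ^ p = b ^ 2 ^ e) :
    ∃ w, LiesIn M w ∧ w ^ p = b := by
  refine ⟨z ^ 2 ^ ((M - 1) * e), ?_, ?_⟩
  · rw [LiesIn, pow_right_comm, hz]
  · have hMe : e + (M - 1) * e = M * e := by
      rw [add_comm, ← Nat.succ_mul, Nat.succ_eq_add_one,
        Nat.sub_add_cancel (Nat.one_le_iff_ne_zero.mpr hM)]
    calc (z ^ 2 ^ ((M - 1) * e)) ^ p = b ^ 2 ^ (M * e) := by
          rw [pow_right_comm, hzb, ← pow_mul, ← pow_add, hMe]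
      _ = b := hb.mul_right e

theorem exists_pow_eq_of_cubic_of_exists_pow_eq {M e p : ℕ} (hM : M ≠ 0) {a b : Ω}
    (hb : LiesIn M b) (ha : LiesIn (M * 3) a) (ha' : ¬ LiesIn M a)
    (hab : a ^ 3 + a + b ^ 2 ^ e = 0) (hroot : ∃ y, LiesIn (M * 3) y ∧ y ^ p = a) :
    ∃ w, LiesIn M w ∧ w ^ p = b := by
  obtain ⟨y, hy, rfl⟩ := hroot
  set σ := iterateFrobenius Ω 2 M
  have hy3 : σ (σ (σ y)) = y := (iterateFrobenius_mul_apply Ω 2 M 3 y).symm.trans hy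
  have ha3 : σ (σ (σ (y ^ p))) = y ^ p := (iterateFrobenius_mul_apply Ω 2 M 3 _).symm.trans ha
  have hc : σ (b ^ 2 ^ e) = b ^ 2 ^ e := by
    rw [map_pow, (liesIn_iff_iterateFrobenius M b).mp hb]
  refine hb.exists_pow_eq_of_two_pow_pow_eq (e := e) hM (z := y * σ y * σ (σ y)) ?_ ?_
  · change σ (y * σ y * σ (σ y)) = y * σ y * σ (σ y)
    rw [map_mul, map_mul, hy3]
    ring
  · rw [mul_pow, mul_pow, ← map_pow, ← map_pow, ← map_pow,
      mul_map_mul_map_map_eq_neg σ hab hc ha3 ha', CharTwo.neg_eq]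

theorem stmt_6_general (e : ℕ) (x : ℕ → Ω)
    (hx : ∀ k, 1 ≤ k → LiesIn (2 * 3 ^ k) (x k))
    (hrec : ∀ k, 2 ≤ k → (x k) ^ 3 + x k + (x (k - 1)) ^ (2 ^ e) = 0)
    (hirr : ∀ k, 2 ≤ k → ¬ LiesIn (2 * 3 ^ (k - 1)) (x k))
    (n : ℕ) (hn : 2 ≤ n)
    (p : ℕ)
    (hnp : ¬ ∃ y : Ω, LiesIn (2 * 3 ^ (n - 1)) y ∧ y ^ p = x (n - 1)) :
    ∀ j, n ≤ j → ¬ ∃ y : Ω, LiesIn (2 * 3 ^ j) y ∧ y ^ p = x j := by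
  have hdescent : ∀ k, 1 ≤ k →
      (∃ y : Ω, LiesIn (2 * 3 ^ (k + 1)) y ∧ y ^ p = x (k + 1)) →
      ∃ y : Ω, LiesIn (2 * 3 ^ k) y ∧ y ^ p = x k := by
    intro k hk
    rw [pow_succ, ← mul_assoc]
    exact exists_pow_eq_of_cubic_of_exists_pow_eq (by positivity) (hx k hk)
      (by simpa only [pow_succ, ← mul_assoc] using hx (k + 1) (by omega))
      (hirr (k + 1) (by omega)) (hrec (k + 1) (by omega))
  have hfrom : ∀ j, n - 1 ≤ j → ¬ ∃ y : Ω, LiesIn (2 * 3 ^ j) y ∧ y ^ p = x j := by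
    intro j hj
    induction j, hj using Nat.le_induction with
    | base => exact hnp
    | succ j hj ih => exact fun h => ih (hdescent j (by omega) h)
  exact fun j hj => hfrom j (by omega)

theorem stmt_6 (e : ℕ) (x : ℕ → Ω)
    (hx : ∀ k, 1 ≤ k → LiesIn (2 * 3 ^ k) (x k))
    (hrec : ∀ k, 2 ≤ k → (x k) ^ 3 + x k + (x (k - 1)) ^ (2 ^ e) = 0)
    (hirr : ∀ k, 2 ≤ k → ¬ LiesIn (2 * 3 ^ (k - 1)) (x k))
    (n : ℕ) (hn : 2 ≤ n)
    (p : ℕ) (hp : p.Prime) (hpdvd : p ∣ 2 ^ (2 * 3 ^ (n - 1)) - 1)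
    (hxn0 : x (n - 1) ≠ 0)
    (hnp : ¬ ∃ y : Ω, LiesIn (2 * 3 ^ (n - 1)) y ∧ y ^ p = x (n - 1)) :
    ∀ j, n ≤ j → ¬ ∃ y : Ω, LiesIn (2 * 3 ^ j) y ∧ y ^ p = x j :=
  stmt_6_general e x hx hrec hirr n hn p hnp
end

section
/- For integers m ≥ 1 and 0 ≤ i < m and z ∈ Ω, define N_{m,i}(z) := z^(∏_{t=1}^{i} (4^(2·3^(m-t)) + 4^(3^(m-t)) + 1)), with N_{m,0}(z) = z; this is the norm map from GF(2, 2·3^m) to GF(2, 2·3^(m-i)). Let e ≥ 0, n ≥ 2 and 1 ≤ j < n be integers and let x : ℕ → Ω be such that, for every k ≥ 1, x k is nonzero and lies in GF(2, 2·3^k). Then N_{n,j}(x n) / (x(n-j))^(2^(e·j)) = ∏_{k=1}^{j} ( N_{n-k, j-k}( N_{n-k+1,1}(x(n-k+1)) / (x(n-k))^(2^e) ) )^(2^(e·(k-1))). In particular, if N_{k,1}(x k) = (x(k-1))^(2^e) for every k with 2 ≤ k ≤ n, then N_{n,j}(x n) = (x(n-j))^(2^(e·j)). -/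
/-- The norm map from `GF(2, 2·3^m)` down to `GF(2, 2·3^(m-i))`:
`N_{m,i}(z) = z ^ (∏_{t=1}^{i} (4^(2·3^(m-t)) + 4^(3^(m-t)) + 1))`. -/
noncomputable def Nrm (m i : ℕ) (z : Ω) : Ω :=
  z ^ (∏ t ∈ Finset.Icc 1 i, (4 ^ (2 * 3 ^ (m - t)) + 4 ^ (3 ^ (m - t)) + 1))

/-
Writing `N` for the norm maps, `N_{m+1,i+1} = N_{m,i} ∘ N_{m+1,1}`, so the `k`-th factor of the
product equals `a (k-1) / a k` with `a k = N_{n-k,j-k}(x (n-k)) ^ 2^(e k)`. The product therefore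
telescopes to `a 0 / a j`, which is the left-hand side. Under the hypothesis
`N_{k,1}(x k) = x (k-1) ^ 2^e` every factor is the norm of `1`.
-/

theorem Finset.prod_Icc_div_telescope {G₀ : Type*} [CommGroupWithZero G₀] (a : ℕ → G₀) (j : ℕ)
    (ha : ∀ k ≤ j, a k ≠ 0) :
    ∏ k ∈ Finset.Icc 1 j, a (k - 1) / a k = a 0 / a j := by
  induction j with
  | zero => simp [div_self (ha 0 le_rfl)]
  | succ j ih =>
    rw [Finset.prod_Icc_succ_top (by omega), ih fun k hk => ha k (by omega), Nat.add_sub_cancel,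
      div_mul_div_cancel₀ (ha j (by omega))]

lemma nrm_zero (m : ℕ) (z : Ω) : Nrm m 0 z = z := by
  simp [Nrm]

lemma nrm_succ (m i : ℕ) (z : Ω) :
    Nrm m (i + 1) z = Nrm m i z ^ (4 ^ (2 * 3 ^ (m - (i + 1))) + 4 ^ (3 ^ (m - (i + 1))) + 1) := by
  rw [Nrm, Nrm, Finset.prod_Icc_succ_top (by omega), pow_mul]

lemma nrm_succ_succ (m i : ℕ) (z : Ω) : Nrm (m + 1) (i + 1) z = Nrm m i (Nrm (m + 1) 1 z) := by
  induction i with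
  | zero => rw [nrm_zero]
  | succ i ih => rw [nrm_succ (m + 1) (i + 1), ih, nrm_succ m i, Nat.add_sub_add_right]

lemma nrm_pow (m i p : ℕ) (z : Ω) : Nrm m i (z ^ p) = Nrm m i z ^ p :=
  pow_right_comm _ _ _

lemma nrm_div (m i : ℕ) (z w : Ω) : Nrm m i (z / w) = Nrm m i z / Nrm m i w :=
  div_pow _ _ _

lemma nrm_one (m i : ℕ) : Nrm m i (1 : Ω) = 1 :=
  one_pow _

lemma nrm_ne_zero (m i : ℕ) {z : Ω} (hz : z ≠ 0) : Nrm m i z ≠ 0 :=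
  pow_ne_zero _ hz

lemma nrm_nrm_div_pow_pow (e l m i : ℕ) (y w : Ω) :
    Nrm m i (Nrm (m + 1) 1 y / w ^ 2 ^ e) ^ 2 ^ (e * l) =
      Nrm (m + 1) (i + 1) y ^ 2 ^ (e * l) / Nrm m i w ^ 2 ^ (e * (l + 1)) := by
  rw [nrm_div, ← nrm_succ_succ, nrm_pow, div_pow, ← pow_mul, ← pow_add, add_comm e, ← mul_add_one]

lemma nrm_div_pow_eq_prod (e n j : ℕ) (hjn : j < n) (x : ℕ → Ω) (hx : ∀ k, 1 ≤ k → x k ≠ 0) :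
    Nrm n j (x n) / x (n - j) ^ 2 ^ (e * j) = ∏ k ∈ Finset.Icc 1 j,
      Nrm (n - k) (j - k) (Nrm (n - k + 1) 1 (x (n - k + 1)) / x (n - k) ^ 2 ^ e) ^ 2 ^ (e * (k - 1)) := by
  set a : ℕ → Ω := fun k => Nrm (n - k) (j - k) (x (n - k)) ^ 2 ^ (e * k)
  have hfactor : ∀ k ∈ Finset.Icc 1 j,
      Nrm (n - k) (j - k) (Nrm (n - k + 1) 1 (x (n - k + 1)) / x (n - k) ^ 2 ^ e) ^ 2 ^ (e * (k - 1))
        = a (k - 1) / a k := by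
    intro k hk
    obtain ⟨hk1, hkj⟩ := Finset.mem_Icc.mp hk
    have hn : n - k + 1 = n - (k - 1) := by omega
    have hj : j - k + 1 = j - (k - 1) := by omega
    have hsucc : k - 1 + 1 = k := by omega
    rw [nrm_nrm_div_pow_pow, hn, hj, hsucc]
  rw [Finset.prod_congr rfl hfactor, Finset.prod_Icc_div_telescope a j
    fun k hk => pow_ne_zero _ (nrm_ne_zero _ _ (hx (n - k) (by omega)))]
  simp [a, nrm_zero]

theorem stmt_7_general (e n j : ℕ) (hjn : j < n)
    (x : ℕ → Ω)
    (hx : ∀ k, 1 ≤ k → x k ≠ 0 ∧ LiesIn (2 * 3 ^ k) (x k)) :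
    Nrm n j (x n) / (x (n - j)) ^ (2 ^ (e * j)) =
      ∏ k ∈ Finset.Icc 1 j,
        (Nrm (n - k) (j - k)
          (Nrm (n - k + 1) 1 (x (n - k + 1)) / (x (n - k)) ^ (2 ^ e))) ^ (2 ^ (e * (k - 1))) ∧
    ((∀ k, 2 ≤ k → k ≤ n → Nrm k 1 (x k) = (x (k - 1)) ^ (2 ^ e)) →
      Nrm n j (x n) = (x (n - j)) ^ (2 ^ (e * j))) := by
  have hx0 : ∀ k, 1 ≤ k → x k ≠ 0 := fun k hk => (hx k hk).1
  have htelescope := nrm_div_pow_eq_prod e n j hjn x hx0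
  refine ⟨htelescope, fun hrec => ?_⟩
  have hprod : ∏ k ∈ Finset.Icc 1 j,
      Nrm (n - k) (j - k) (Nrm (n - k + 1) 1 (x (n - k + 1)) / x (n - k) ^ 2 ^ e) ^ 2 ^ (e * (k - 1))
        = 1 := by
    refine Finset.prod_eq_one fun k hk => ?_
    obtain ⟨hk1, hkj⟩ := Finset.mem_Icc.mp hk
    rw [hrec (n - k + 1) (by omega) (by omega), Nat.add_sub_cancel,
      div_self (pow_ne_zero _ (hx0 (n - k) (by omega))), nrm_one, one_pow]
  rwa [hprod, div_eq_one_iff_eq (pow_ne_zero _ (hx0 (n - j) (by omega)))] at htelescope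

theorem stmt_7 (e n j : ℕ) (hn : 2 ≤ n) (hj1 : 1 ≤ j) (hjn : j < n)
    (x : ℕ → Ω)
    (hx : ∀ k, 1 ≤ k → x k ≠ 0 ∧ LiesIn (2 * 3 ^ k) (x k)) :
    Nrm n j (x n) / (x (n - j)) ^ (2 ^ (e * j)) =
      ∏ k ∈ Finset.Icc 1 j,
        (Nrm (n - k) (j - k)
          (Nrm (n - k + 1) 1 (x (n - k + 1)) / (x (n - k)) ^ (2 ^ e))) ^ (2 ^ (e * (k - 1))) ∧
    ((∀ k, 2 ≤ k → k ≤ n → Nrm k 1 (x k) = (x (k - 1)) ^ (2 ^ e)) →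
      Nrm n j (x n) = (x (n - j)) ^ (2 ^ (e * j))) :=
  stmt_7_general e n j hjn x hx
end

section
/- Let e ≥ 0 be an integer and let x : ℕ → Ω satisfy: for every k ≥ 1, x k lies in GF(2, 2·3^k); for every k ≥ 2, (x k)³ + (x k) + (x(k-1))^(2^e) = 0 and x k does not lie in GF(2, 2·3^(k-1)) (so the recursion defines an infinite normal tower of fields). Suppose moreover that x 1 ≠ 0 and x 1 is not a cube in GF(2,6), i.e. there is no y ∈ Ω with y^(2^6) = y and y³ = x 1. Then for every n ≥ 2, (x n)³ does not lie in GF(2, 2·3^(n-1)), and orderOf (x n) > 3^((n² + 3n)/2 − 1). -/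
/-!
Write `q = 2 ^ (2 * 3 ^ k)` for the size of `GF(2, 2 * 3 ^ k)`. The conjugates of `x (k + 1)` over
this field are the three roots of `T ^ 3 + T + x k ^ 2 ^ e`, so the norm of `x (k + 1)` is
`x k ^ 2 ^ e`. Hence `x k` is a power of `x (k + 1)`, and a cube root of `x (k + 1)` would give one
of `x k`, so no `x k` is a cube.

The index of `⟨x k⟩` in `⟨x (k + 1)⟩` is at least the order `s` of `x (k + 1) ^ (q - 1)`,
which divides `q ^ 2 + q + 1 ≡ 3 [MOD 9]`. As `x (k + 1)` is not a cube, `3 ∣ s`; as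
`x (k + 1) ^ 3 ∉ GF(q)`, `s ≠ 3`. So `s` has a prime factor `ℓ ≠ 3` dividing
`q ^ 2 + q + 1`, modulo which `4` has order `3 ^ (k + 1)`; thus `ℓ > 2 * 3 ^ (k + 1)` and
`s ≥ 3 ℓ > 3 ^ (k + 2)`. Starting from `9 ∣ orderOf (x 1)`, the order of `x n` is at least
`3 ^ (2 + 3 + ⋯ + (n + 1))`.
-/

theorem mul_mul_eq_neg_of_cubic_roots_s8 {R : Type*} [CommRing R] [IsDomain R] {p t a b c : R}
    (ha : a ^ 3 + p * a + t = 0) (hb : b ^ 3 + p * b + t = 0) (hc : c ^ 3 + p * c + t = 0)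
    (hab : a ≠ b) (hac : a ≠ c) (hbc : b ≠ c) : a * b * c = -t := by
  have quadratic {u v : R} (hu : u ^ 3 + p * u + t = 0) (hv : v ^ 3 + p * v + t = 0)
      (huv : u ≠ v) : u ^ 2 + u * v + v ^ 2 + p = 0 := by
    have : (u - v) * (u ^ 2 + u * v + v ^ 2 + p) = 0 := by linear_combination hu - hv
    exact (mul_eq_zero.mp this).resolve_left (sub_ne_zero.mpr huv)
  have hab' := quadratic ha hb hab
  have hac' := quadratic ha hc hac
  have hsum : a + b + c = 0 := by
    have : (b - c) * (a + b + c) = 0 := by linear_combination hab' - hac'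
    exact (mul_eq_zero.mp this).resolve_left (sub_ne_zero.mpr hbc)
  linear_combination a * b * hsum + ha - a * hab'

theorem orderOf_mul_orderOf_pow_dvd {G : Type*} [Monoid G] (x : G) {n w : ℕ}
    (h : (x ^ w) ^ n = 1) : orderOf (x ^ w) * orderOf (x ^ n) ∣ orderOf x := by
  rcases eq_or_ne n 0 with rfl | hn
  · simpa using orderOf_pow_dvd w
  have hg : orderOf (x ^ w) ∣ (orderOf x).gcd n :=
    Nat.dvd_gcd (orderOf_pow_dvd w) (orderOf_dvd_of_pow_eq_one h)
  rw [orderOf_pow' x hn]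
  calc _ ∣ (orderOf x).gcd n * (orderOf x / (orderOf x).gcd n) := Nat.mul_dvd_mul_right hg _
    _ = orderOf x := Nat.mul_div_cancel' (Nat.gcd_dvd_left _ _)

theorem three_dvd_two_pow_sub_one {m : ℕ} (hm : Even m) : 3 ∣ 2 ^ m - 1 := by
  obtain ⟨j, rfl⟩ := hm
  simpa [← two_mul, pow_mul] using Nat.sub_dvd_pow_sub_pow 4 1 j

theorem sub_one_mul_sq_add_add_one (q : ℕ) : (q - 1) * (q ^ 2 + q + 1) = q ^ 3 - 1 := by
  cases q with
  | zero => rfl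
  | succ q =>
    rw [Nat.add_sub_cancel, show (q + 1) ^ 3 = q * ((q + 1) ^ 2 + (q + 1) + 1) + 1 by ring]
    rfl

theorem sq_add_add_one_mod_nine {q : ℕ} (hq : q % 3 = 1) : (q ^ 2 + q + 1) % 9 = 3 := by
  obtain ⟨a, rfl⟩ : ∃ a, q = 3 * a + 1 := ⟨q / 3, by omega⟩
  rw [show (3 * a + 1) ^ 2 + (3 * a + 1) + 1 = 9 * (a ^ 2 + a) + 3 by ring]
  omega

theorem exists_prime_three_mul_dvd {s Q : ℕ} (hQ : Q % 9 = 3) (hsQ : s ∣ Q) (hs3 : ¬ s ∣ 3)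
    (hsQ3 : ¬ s ∣ Q / 3) : ∃ ℓ, ℓ.Prime ∧ ℓ ≠ 3 ∧ ℓ ∣ Q ∧ 3 * ℓ ∣ s := by
  obtain ⟨Q', rfl⟩ : 3 ∣ Q := by omega
  have hQ' : ¬ 3 ∣ Q' := by omega
  rw [Nat.mul_div_cancel_left _ three_pos] at hsQ3
  obtain ⟨t, rfl⟩ : 3 ∣ s := by
    by_contra h
    have h3s : Nat.Coprime 3 s := (Nat.Prime.coprime_iff_not_dvd Nat.prime_three).mpr h
    exact hsQ3 (h3s.symm.dvd_of_dvd_mul_left hsQ)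
  have ht : t ≠ 1 := by rintro rfl; exact hs3 dvd_rfl
  obtain ⟨ℓ, hℓ, hℓt⟩ := Nat.exists_prime_and_dvd ht
  have hℓQ' : ℓ ∣ Q' := hℓt.trans (Nat.dvd_of_mul_dvd_mul_left three_pos hsQ)
  refine ⟨ℓ, hℓ, ?_, hℓQ'.mul_left 3, Nat.mul_dvd_mul_left 3 hℓt⟩
  rintro rfl
  exact hQ' hℓQ'

/-- Modulo such a prime `ℓ`, `4` has order exactly `3 ^ (k + 1)`, and `ℓ` is odd. -/
theorem lt_of_prime_dvd_sq_add_add_one {ℓ k : ℕ} (hℓ : ℓ.Prime) (hℓ3 : ℓ ≠ 3)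
    (h : ℓ ∣ (4 ^ 3 ^ k) ^ 2 + 4 ^ 3 ^ k + 1) : 2 * 3 ^ (k + 1) < ℓ := by
  have hr : ((4 : ZMod ℓ) ^ 3 ^ k) ^ 2 + 4 ^ 3 ^ k + 1 = 0 := by
    exact_mod_cast (ZMod.natCast_eq_zero_iff _ ℓ).mpr h
  have hpow : (4 : ZMod ℓ) ^ 3 ^ (k + 1) = 1 := by
    rw [pow_succ, pow_mul]; linear_combination (4 ^ 3 ^ k - 1 : ZMod ℓ) * hr
  have hne : ¬ (4 : ZMod ℓ) ^ 3 ^ k = 1 := by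
    intro h1
    rw [h1] at hr
    have : ((3 : ℕ) : ZMod ℓ) = 0 := by push_cast; linear_combination hr
    exact hℓ3 ((Nat.prime_dvd_prime_iff_eq hℓ Nat.prime_three).mp
      ((ZMod.natCast_eq_zero_iff 3 ℓ).mp this))
  have hℓ2 : ℓ ≠ 2 := by
    rintro rfl
    rw [show (4 : ZMod 2) = 0 by decide, zero_pow (by positivity)] at hpow
    exact zero_ne_one hpow
  have := Fact.mk hℓ
  have h4 : (4 : ZMod ℓ) ≠ 0 := fun h0 => by simp [h0] at hpow
  have hdvd : 2 * 3 ^ (k + 1) ∣ ℓ - 1 :=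
    Nat.Coprime.mul_dvd_of_dvd_of_dvd (Nat.Coprime.pow_right _ (by norm_num))
      (hℓ.even_sub_one hℓ2).two_dvd
      (orderOf_eq_prime_pow hne hpow ▸ ZMod.orderOf_dvd_card_sub_one h4)
  exact (Nat.le_sub_one_iff_lt hℓ.pos).mp (Nat.le_of_dvd (Nat.sub_pos_of_lt hℓ.one_lt) hdvd)

theorem pow_two_pow_injective (m : ℕ) : Function.Injective (fun z : Ω => z ^ 2 ^ m) :=
  fun _ _ h => iterateFrobenius_inj Ω 2 m (by simpa only [iterateFrobenius_def] using h)

namespace LiesIn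

variable {m : ℕ} {z : Ω}

theorem pow (h : LiesIn m z) (t : ℕ) : LiesIn m (z ^ t) := by
  rw [LiesIn, ← pow_mul, mul_comm, pow_mul, h]

theorem add {w : Ω} (hz : LiesIn m z) (hw : LiesIn m w) : LiesIn m (z + w) := by
  rw [LiesIn, add_pow_char_pow, hz, hw]

theorem of_dvd {n : ℕ} (h : LiesIn m z) (hmn : m ∣ n) : LiesIn n z := by
  obtain ⟨k, rfl⟩ := hmn
  induction k with
  | zero => simp [LiesIn]
  | succ k ih => rw [LiesIn, mul_add_one, pow_add, pow_mul, ih, h]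

theorem pow_sub_one_eq_one (h : LiesIn m z) (hz : z ≠ 0) : z ^ (2 ^ m - 1) = 1 := by
  refine mul_right_cancel₀ hz ?_
  rw [← pow_succ, Nat.sub_add_cancel Nat.one_le_two_pow, one_mul]
  exact h

theorem of_pow_sub_one_eq_one (h : z ^ (2 ^ m - 1) = 1) : LiesIn m z := by
  rw [LiesIn, ← Nat.sub_add_cancel (Nat.one_le_two_pow (n := m)), pow_succ, h, one_mul]

theorem pow_two_pow_pow_two_pow (h : LiesIn m z) (hm : 0 < m) (e : ℕ) :
    (z ^ 2 ^ e) ^ 2 ^ ((m - 1) * e) = z := by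
  rw [← pow_mul, ← pow_add, ← one_add_mul, Nat.add_sub_of_le (Nat.one_le_of_lt hm)]
  exact h.of_dvd (dvd_mul_right m e)

theorem cubic_pow_two_pow {X c : Ω} (hc : LiesIn m c) (h : X ^ 3 + X + c = 0) :
    (X ^ 2 ^ m) ^ 3 + X ^ 2 ^ m + c = 0 := by
  have hc' : c ^ 2 ^ m = c := hc
  have := congrArg (iterateFrobenius Ω 2 m) h
  simpa only [map_add, map_pow, map_zero, iterateFrobenius_def, hc'] using this

theorem pow_cube {w : Ω} (hw : LiesIn (3 * m) w) : w ^ (2 ^ m) ^ 3 = w := by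
  rw [← pow_mul, mul_comm]; exact hw

theorem pow_sq_add_add_one {w : Ω} (hw : LiesIn (3 * m) w) :
    LiesIn m (w ^ ((2 ^ m) ^ 2 + 2 ^ m + 1)) := by
  rw [LiesIn, ← pow_mul,
    show ((2 ^ m) ^ 2 + 2 ^ m + 1) * 2 ^ m = (2 ^ m) ^ 3 + (2 ^ m) ^ 2 + 2 ^ m by ring,
    pow_add, pow_add, hw.pow_cube]
  ring

theorem orderOf_pos (h : LiesIn m z) (hz : z ≠ 0) (hm : 0 < m) :
    0 < orderOf z :=
  orderOf_pos_iff.mpr <| isOfFinOrder_iff_pow_eq_one.mpr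
    ⟨2 ^ m - 1, Nat.sub_pos_of_lt (Nat.one_lt_two_pow hm.ne'), h.pow_sub_one_eq_one hz⟩

end LiesIn

theorem not_liesIn_pow_three_of_cubic {m : ℕ} {X c : Ω} (hXm : ¬ LiesIn m X) (hc : LiesIn m c)
    (h : X ^ 3 + X + c = 0) : ¬ LiesIn m (X ^ 3) := by
  have hX : X ^ 3 + c = X := CharTwo.add_eq_zero.mp (by linear_combination h)
  exact fun h3 => hXm (hX ▸ h3.add hc)

/-- The three conjugates `X, X ^ q, X ^ q ^ 2` over `GF(2, m)` are the roots of `T ^ 3 + T + c`,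
so their product, the norm of `X`, is `c`. -/
theorem pow_sq_add_add_one_eq_of_cubic {m : ℕ} {X c : Ω} (hX : LiesIn (3 * m) X)
    (hXm : ¬ LiesIn m X) (hc : LiesIn m c) (h : X ^ 3 + X + c = 0) :
    X ^ ((2 ^ m) ^ 2 + 2 ^ m + 1) = c := by
  set y := X ^ 2 ^ m
  set z := y ^ 2 ^ m
  have hy := hc.cubic_pow_two_pow h
  have hz := hc.cubic_pow_two_pow hy
  have hzX : z ^ 2 ^ m = X := by
    rw [← hX.pow_cube]; simp only [z, y, ← pow_mul]; ring_nf
  have hXy : X ≠ y := fun hXy => hXm hXy.symm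
  have hyz : y ≠ z := fun hyz => hXy (pow_two_pow_injective m hyz)
  have hXz : X ≠ z := fun hXz => hXy (hzX.symm.trans (by rw [← hXz]))
  have hnorm : X ^ ((2 ^ m) ^ 2 + 2 ^ m + 1) = X * y * z := by
    simp only [z, y, ← pow_mul, ← pow_add]; ring_nf
  rw [hnorm, mul_mul_eq_neg_of_cubic_roots_s8 (p := 1) (by simpa using h) (by simpa using hy)
    (by simpa using hz) hXy hXz hyz, CharTwo.neg_eq]

def IsCubeIn (m : ℕ) (z : Ω) : Prop := ∃ y, LiesIn m y ∧ y ^ 3 = z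

theorem isCubeIn_zero (m : ℕ) : IsCubeIn m 0 := ⟨0, by simp [LiesIn], by simp⟩

theorem pow_ne_one_of_not_isCubeIn {m : ℕ} {X : Ω} (hm : 3 ∣ 2 ^ m - 1)
    (hcube : ¬ IsCubeIn m X) : X ^ ((2 ^ m - 1) / 3) ≠ 1 := by
  intro hX
  obtain ⟨w, rfl⟩ := IsAlgClosed.exists_pow_nat_eq X three_pos
  refine hcube ⟨w, LiesIn.of_pow_sub_one_eq_one ?_, rfl⟩
  rwa [← Nat.mul_div_cancel' hm, pow_mul]

/-- With `q = 2 ^ m` and `s` the order of `X ^ (q - 1)`: `s ∣ q ^ 2 + q + 1` since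
`X ^ (q ^ 3 - 1) = 1`, `s ∤ 3` since `X ^ 3 ∉ GF(2, m)`, and `s ∤ (q ^ 2 + q + 1) / 3` since
`X` is not a cube. -/
theorem exists_prime_three_mul_dvd_orderOf_pow {m : ℕ} {X : Ω} (hm : Even m)
    (hX : LiesIn (3 * m) X) (hX3 : ¬ LiesIn m (X ^ 3)) (hcube : ¬ IsCubeIn (3 * m) X) :
    ∃ ℓ, ℓ.Prime ∧ ℓ ≠ 3 ∧ ℓ ∣ (2 ^ m) ^ 2 + 2 ^ m + 1 ∧
      3 * ℓ ∣ orderOf (X ^ (2 ^ m - 1)) := by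
  have hX0 : X ≠ 0 := by rintro rfl; exact hcube (isCubeIn_zero _)
  have hq : 2 ^ m % 3 = 1 := by
    have := three_dvd_two_pow_sub_one hm
    have := Nat.one_le_two_pow (n := m)
    omega
  have hN : (2 ^ m - 1) * ((2 ^ m) ^ 2 + 2 ^ m + 1) = 2 ^ (3 * m) - 1 := by
    rw [sub_one_mul_sq_add_add_one, ← pow_mul, mul_comm]
  have hQ := sq_add_add_one_mod_nine hq
  apply exists_prime_three_mul_dvd hQ
  · rw [orderOf_dvd_iff_pow_eq_one, ← pow_mul, hN]
    exact hX.pow_sub_one_eq_one hX0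
  · rw [orderOf_dvd_iff_pow_eq_one, ← pow_mul, mul_comm, pow_mul]
    exact fun h => hX3 (LiesIn.of_pow_sub_one_eq_one h)
  · rw [orderOf_dvd_iff_pow_eq_one, ← pow_mul, ← Nat.mul_div_assoc _ (by omega), hN]
    exact pow_ne_one_of_not_isCubeIn
      (three_dvd_two_pow_sub_one (hm.mul_left 3)) hcube

structure IsCubicTower (e : ℕ) (x : ℕ → Ω) : Prop where
  liesIn : ∀ k, 1 ≤ k → LiesIn (2 * 3 ^ k) (x k)
  cubic : ∀ k, 2 ≤ k → (x k) ^ 3 + x k + (x (k - 1)) ^ (2 ^ e) = 0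
  not_liesIn : ∀ k, 2 ≤ k → ¬ LiesIn (2 * 3 ^ (k - 1)) (x k)

namespace IsCubicTower

variable {e : ℕ} {x : ℕ → Ω} (hT : IsCubicTower e x) {k : ℕ}
include hT

theorem liesIn_succ (k : ℕ) : LiesIn (3 * (2 * 3 ^ k)) (x (k + 1)) := by
  rw [show 3 * (2 * 3 ^ k) = 2 * 3 ^ (k + 1) by ring]
  exact hT.liesIn (k + 1) (by omega)

theorem cubic_succ (hk : 1 ≤ k) : x (k + 1) ^ 3 + x (k + 1) + x k ^ 2 ^ e = 0 := by
  simpa using hT.cubic (k + 1) (by omega)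

theorem not_liesIn_succ (hk : 1 ≤ k) : ¬ LiesIn (2 * 3 ^ k) (x (k + 1)) := by
  simpa using hT.not_liesIn (k + 1) (by omega)

theorem pow_sq_add_add_one_succ (hk : 1 ≤ k) :
    x (k + 1) ^ ((2 ^ (2 * 3 ^ k)) ^ 2 + 2 ^ (2 * 3 ^ k) + 1) = x k ^ 2 ^ e :=
  pow_sq_add_add_one_eq_of_cubic (hT.liesIn_succ k) (hT.not_liesIn_succ hk)
    ((hT.liesIn k hk).pow _) (hT.cubic_succ hk)

theorem exists_pow_succ_eq (hk : 1 ≤ k) : ∃ w, x (k + 1) ^ w = x k :=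
  ⟨((2 ^ (2 * 3 ^ k)) ^ 2 + 2 ^ (2 * 3 ^ k) + 1) * 2 ^ ((2 * 3 ^ k - 1) * e), by
    rw [pow_mul, hT.pow_sq_add_add_one_succ hk,
      (hT.liesIn k hk).pow_two_pow_pow_two_pow (by positivity) e]⟩

/-- If `w ^ 3 = x (k + 1)`, a Frobenius twist of the norm of `w` is a cube root of `x k`. -/
theorem not_isCubeIn (h1 : ¬ IsCubeIn 6 (x 1)) :
    ∀ k, 1 ≤ k → ¬ IsCubeIn (2 * 3 ^ k) (x k) := by
  intro k hk
  induction k, hk using Nat.le_induction with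
  | base => simpa using h1
  | succ k hk ih =>
    rintro ⟨w, hw, hw3⟩
    rw [show 2 * 3 ^ (k + 1) = 3 * (2 * 3 ^ k) by ring] at hw
    refine ih ⟨(w ^ ((2 ^ (2 * 3 ^ k)) ^ 2 + 2 ^ (2 * 3 ^ k) + 1)) ^ 2 ^ ((2 * 3 ^ k - 1) * e),
      hw.pow_sq_add_add_one.pow _, ?_⟩
    calc _ = ((w ^ 3) ^ ((2 ^ (2 * 3 ^ k)) ^ 2 + 2 ^ (2 * 3 ^ k) + 1))
            ^ 2 ^ ((2 * 3 ^ k - 1) * e) := by ring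
      _ = x k := by
          rw [hw3, hT.pow_sq_add_add_one_succ hk,
            (hT.liesIn k hk).pow_two_pow_pow_two_pow (by positivity) e]

theorem ne_zero (h1 : ¬ IsCubeIn 6 (x 1)) (hk : 1 ≤ k) : x k ≠ 0 := by
  intro h0
  exact hT.not_isCubeIn h1 k hk (h0 ▸ isCubeIn_zero _)

theorem orderOf_mul_le (h1 : ¬ IsCubeIn 6 (x 1)) (hk : 1 ≤ k) :
    orderOf (x k) * 3 ^ (k + 2) ≤ orderOf (x (k + 1)) := by
  obtain ⟨ℓ, hℓ, hℓ3, hℓQ, hℓs⟩ :=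
    exists_prime_three_mul_dvd_orderOf_pow (even_two_mul _) (hT.liesIn_succ k)
    (not_liesIn_pow_three_of_cubic (hT.not_liesIn_succ hk) ((hT.liesIn k hk).pow _)
      (hT.cubic_succ hk))
    (by rw [show 3 * (2 * 3 ^ k) = 2 * 3 ^ (k + 1) by ring]; exact hT.not_isCubeIn h1 _ (by omega))
  rw [pow_mul, show 2 ^ 2 = 4 by rfl] at hℓQ
  have hℓk := lt_of_prime_dvd_sq_add_add_one hℓ hℓ3 hℓQ
  obtain ⟨w, hw⟩ := hT.exists_pow_succ_eq hk
  have hdvd := orderOf_mul_orderOf_pow_dvd (x (k + 1)) (n := 2 ^ (2 * 3 ^ k) - 1) (w := w)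
    (by rw [hw]; exact (hT.liesIn k hk).pow_sub_one_eq_one (hT.ne_zero h1 hk))
  rw [hw] at hdvd
  have hpos := (hT.liesIn_succ k).orderOf_pos (hT.ne_zero h1 (by omega)) (by positivity)
  have hs := Nat.le_of_dvd (Nat.pos_of_dvd_of_pos (orderOf_pow_dvd _) hpos) hℓs
  calc orderOf (x k) * 3 ^ (k + 2)
        ≤ orderOf (x k) * orderOf (x (k + 1) ^ (2 ^ (2 * 3 ^ k) - 1)) :=
          Nat.mul_le_mul_left _ (by rw [pow_succ']; omega)
    _ ≤ orderOf (x (k + 1)) := Nat.le_of_dvd hpos hdvd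

theorem nine_le_orderOf_one (h1 : ¬ IsCubeIn 6 (x 1)) : 9 ≤ orderOf (x 1) := by
  have h63 : orderOf (x 1) ∣ 63 :=
    orderOf_dvd_of_pow_eq_one ((hT.liesIn 1 le_rfl).pow_sub_one_eq_one (hT.ne_zero h1 le_rfl))
  have h21 : ¬ orderOf (x 1) ∣ 21 := by
    rw [orderOf_dvd_iff_pow_eq_one]
    exact pow_ne_one_of_not_isCubeIn (m := 6) (by decide) h1
  have : orderOf (x 1) ∈ Nat.divisors 63 := Nat.mem_divisors.2 ⟨h63, by norm_num⟩
  rw [show Nat.divisors 63 = {1, 3, 7, 9, 21, 63} by decide] at this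
  simp only [Finset.mem_insert, Finset.mem_singleton] at this
  rcases this with h | h | h | h | h | h <;> rw [h] at h21 ⊢ <;> omega

theorem three_pow_le_orderOf (h1 : ¬ IsCubeIn 6 (x 1)) :
    ∀ k, 1 ≤ k → 3 ^ ((k ^ 2 + 3 * k) / 2) ≤ orderOf (x k) := by
  intro k hk
  induction k, hk using Nat.le_induction with
  | base => exact hT.nine_le_orderOf_one h1
  | succ k hk ih =>
    calc 3 ^ (((k + 1) ^ 2 + 3 * (k + 1)) / 2) = 3 ^ ((k ^ 2 + 3 * k) / 2) * 3 ^ (k + 2) := by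
          rw [show (k + 1) ^ 2 + 3 * (k + 1) = k ^ 2 + 3 * k + (k + 2) * 2 by ring,
            Nat.add_mul_div_right _ _ two_pos, pow_add]
      _ ≤ orderOf (x k) * 3 ^ (k + 2) := Nat.mul_le_mul_right _ ih
      _ ≤ orderOf (x (k + 1)) := hT.orderOf_mul_le h1 hk

end IsCubicTower

theorem stmt_8_general (e : ℕ) (x : ℕ → Ω)
    (hx : ∀ k, 1 ≤ k → LiesIn (2 * 3 ^ k) (x k))
    (hrec : ∀ k, 2 ≤ k → (x k) ^ 3 + x k + (x (k - 1)) ^ (2 ^ e) = 0)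
    (hirr : ∀ k, 2 ≤ k → ¬ LiesIn (2 * 3 ^ (k - 1)) (x k))
    (hcube : ¬ ∃ y : Ω, y ^ (2 ^ 6) = y ∧ y ^ 3 = x 1) :
    ∀ n, 2 ≤ n → ¬ LiesIn (2 * 3 ^ (n - 1)) ((x n) ^ 3) ∧
      orderOf (x n) > 3 ^ ((n ^ 2 + 3 * n) / 2 - 1) := by
  intro n hn
  have hT : IsCubicTower e x := ⟨hx, hrec, hirr⟩
  refine ⟨not_liesIn_pow_three_of_cubic (hirr n hn) ((hx (n - 1) (by omega)).pow _) (hrec n hn),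
    ?_⟩
  have hE : 1 ≤ (n ^ 2 + 3 * n) / 2 := (Nat.le_div_iff_mul_le two_pos).mpr (by nlinarith)
  calc 3 ^ ((n ^ 2 + 3 * n) / 2 - 1) < 3 ^ ((n ^ 2 + 3 * n) / 2) :=
        Nat.pow_lt_pow_right (by norm_num) (by omega)
    _ ≤ orderOf (x n) := hT.three_pow_le_orderOf hcube n (by omega)

theorem stmt_8 (e : ℕ) (x : ℕ → Ω)
    (hx : ∀ k, 1 ≤ k → LiesIn (2 * 3 ^ k) (x k))
    (hrec : ∀ k, 2 ≤ k → (x k) ^ 3 + x k + (x (k - 1)) ^ (2 ^ e) = 0)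
    (hirr : ∀ k, 2 ≤ k → ¬ LiesIn (2 * 3 ^ (k - 1)) (x k))
    (hx1 : x 1 ≠ 0)
    (hcube : ¬ ∃ y : Ω, y ^ (2 ^ 6) = y ∧ y ^ 3 = x 1) :
    ∀ n, 2 ≤ n → ¬ LiesIn (2 * 3 ^ (n - 1)) ((x n) ^ 3) ∧
      orderOf (x n) > 3 ^ ((n ^ 2 + 3 * n) / 2 - 1) :=
  stmt_8_general e x hx hrec hirr hcube
end

section
/- Let e ≥ 0 and n ≥ 2 be integers. Let w ∈ Ω lie in GF(2, 2·3^(n-1)); let u ∈ Ω be nonzero with u³ lying in GF(2, 2·3^(n-1)) and (u³)² + w^(2^e)·(u³) + 1 = 0; and assume that x := u + u⁻¹ does not lie in GF(2, 2·3^(n-1)) (x is then a root of Y³ + Y + w^(2^e)). Let u' ∈ Ω satisfy (u')³ = u^(2^e) (so u' ≠ 0). Then: (i) u' does not lie in GF(2, 2·3^n); (ii) ((u')³)² + x^(2^e)·((u')³) + 1 = 0, and also (((u')⁻¹)³)² + x^(2^e)·(((u')⁻¹)³) + 1 = 0; and (iii) x' := u' + (u')⁻¹ satisfies (x')³ + x'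 + x^(2^e) = 0 and x' does not lie in GF(2, 2·3^n). -/
/-!
Put `q = 2 ^ (2·3^(n-1))`, so `q ≡ 1 [MOD 9]`. As `u³ ∈ GF(q)` but `u ∉ GF(q)`, `ζ = u ^ (q - 1)` is a
primitive cube root of unity, and `(u' ^ (q - 1))³ = ζ ^ (2^e)` forces `u' ^ (q - 1)` to have order
9. Since `(q^k - 1)/(q - 1) ≡ k [MOD 9]`, `u'` lies in `GF(q^k)` only when `9 ∣ k`; this rules out
`u' ∈ GF(q³)`, and also `x' ∈ GF(q³)`, which would give `u'^(q³) ∈ {u', u'⁻¹}` and so `u' ∈ GF(q⁶)`.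
By Frobenius `x ^ (2^e) = a + a⁻¹` with `a = u'³`, and the two equations become identities in
characteristic 2.
-/

open Finset

theorem Nat.geom_sum_modEq_of_modEq_one {q d : ℕ} (hq : q ≡ 1 [MOD d]) (k : ℕ) :
    ∑ i ∈ range k, q ^ i ≡ k [MOD d] :=
  (Nat.ModEq.sum fun i _ => (hq.pow i).trans (by rw [one_pow])).trans
    (by simpa using Nat.ModEq.refl k)

theorem Nat.two_pow_modEq_one_of_six_dvd {m : ℕ} (hm : 6 ∣ m) : 2 ^ m ≡ 1 [MOD 9] := by
  obtain ⟨j, rfl⟩ := hm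
  simpa [pow_mul] using (show 2 ^ 6 ≡ 1 [MOD 9] by decide).pow j

section Monoid

variable {G : Type*} [CommMonoid G] {p : ℕ} [Fact p.Prime]

theorem orderOf_eq_sq_of_orderOf_pow_eq {g : G} (h : orderOf (g ^ p) = p) :
    orderOf g = p ^ 2 := by
  refine orderOf_eq_prime_pow (fun hg => ?_) ?_
  · rw [pow_one] at hg
    rw [hg, orderOf_one] at h
    exact (Fact.out : p.Prime).one_lt.ne h
  · have hp := pow_orderOf_eq_one (g ^ p)
    rwa [h, ← pow_mul, ← sq] at hp

theorem orderOf_pow_eq_sq_of_pow_prime_eq {u v : G} {t r : ℕ} (hu : orderOf (u ^ t) = p)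
    (hr : p.Coprime r) (hv : v ^ p = u ^ r) : orderOf (v ^ t) = p ^ 2 := by
  refine orderOf_eq_sq_of_orderOf_pow_eq ?_
  rw [← pow_mul, mul_comm, pow_mul, hv, ← pow_mul, mul_comm, pow_mul,
    Nat.Coprime.orderOf_pow (hu ▸ hr), hu]

end Monoid

section Field

variable {K : Type*} [Field K]

theorem pow_sub_one_eq_one_iff {v : K} (hv : v ≠ 0) {q : ℕ} (hq : 1 ≤ q) :
    v ^ (q - 1) = 1 ↔ v ^ q = v := by
  rw [← mul_eq_right₀ hv, ← pow_succ, Nat.sub_add_cancel hq]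

theorem orderOf_pow_sub_one_eq_prime {p : ℕ} [Fact p.Prime] {u : K} (hu : u ≠ 0) {q : ℕ}
    (hq : 1 ≤ q) (hup : (u ^ p) ^ q = u ^ p) (huq : u ^ q ≠ u) : orderOf (u ^ (q - 1)) = p := by
  refine orderOf_eq_prime ?_ ((pow_sub_one_eq_one_iff hu hq).not.2 huq)
  rw [← pow_mul, mul_comm, pow_mul, pow_sub_one_eq_one_iff (pow_ne_zero p hu) hq]
  exact hup

/-- `q ^ k - 1` is `(q - 1)` times `1 + q + ⋯ + q ^ (k - 1)`, which is `≡ k [MOD d]`. -/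
theorem dvd_of_pow_pow_eq_self {v : K} (hv : v ≠ 0) {q k : ℕ} (hq : 1 ≤ q)
    (hqd : q ≡ 1 [MOD orderOf (v ^ (q - 1))]) (hvk : v ^ q ^ k = v) :
    orderOf (v ^ (q - 1)) ∣ k := by
  obtain ⟨t, rfl⟩ : ∃ t, q = t + 1 := ⟨q - 1, (Nat.sub_add_cancel hq).symm⟩
  rw [← pow_sub_one_eq_one_iff hv (Nat.one_le_pow' k t), ← geom_sum_mul_add t k,
    Nat.add_sub_cancel, mul_comm, pow_mul, ← orderOf_dvd_iff_pow_eq_one] at hvk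
  exact Nat.modEq_zero_iff_dvd.1
    ((Nat.geom_sum_modEq_of_modEq_one hqd k).symm.trans (Nat.modEq_zero_iff_dvd.2 hvk))

theorem eq_or_eq_inv_of_add_inv_eq_add_inv {a b : K} (ha : a ≠ 0) (hb : b ≠ 0)
    (h : a + a⁻¹ = b + b⁻¹) : a = b ∨ a = b⁻¹ := by
  have hfac : (a - b) * (a - b⁻¹) = 0 := by
    field_simp at h ⊢
    linear_combination h
  exact (mul_eq_zero.1 hfac).imp sub_eq_zero.1 sub_eq_zero.1

variable {p : ℕ} [ExpChar K p]

theorem add_inv_pow_expChar_pow (v : K) (s : ℕ) :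
    (v + v⁻¹) ^ p ^ s = v ^ p ^ s + (v ^ p ^ s)⁻¹ := by
  rw [add_pow_expChar_pow, inv_pow]

/-- `v ^ p ^ s` is `v` or `v⁻¹`, and either way a second Frobenius power brings it back to `v`. -/
theorem pow_expChar_pow_sq_eq_self {v : K} (hv : v ≠ 0) {s : ℕ}
    (h : (v + v⁻¹) ^ p ^ s = v + v⁻¹) : v ^ (p ^ s) ^ 2 = v := by
  rw [add_inv_pow_expChar_pow] at h
  rw [sq, pow_mul]
  rcases eq_or_eq_inv_of_add_inv_eq_add_inv (pow_ne_zero _ hv) hv h with h | h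
  · rw [h, h]
  · rw [h, inv_pow, h, inv_inv]

end Field

namespace CharTwo

variable {K : Type*} [Field K] [CharP K 2]

theorem sq_add_add_inv_mul_add_one_eq_zero {a : K} (ha : a ≠ 0) :
    a ^ 2 + (a + a⁻¹) * a + 1 = 0 := by
  rw [add_mul, inv_mul_cancel₀ ha, ← sq, ← add_assoc, add_self_eq_zero, zero_add, add_self_eq_zero]

theorem add_inv_cube_add_add_inv_add_cube_add_inv_eq_zero (y : K) :
    (y + y⁻¹) ^ 3 + (y + y⁻¹) + (y ^ 3 + (y ^ 3)⁻¹) = 0 := by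
  rcases eq_or_ne y 0 with rfl | hy
  · simp
  field_simp
  linear_combination (y ^ 6 + 2 * y ^ 4 + 2 * y ^ 2 + 1) * two_eq_zero (R := K)

end CharTwo

theorem stmt_17_general (e n : ℕ) (hn : 2 ≤ n) (u u' : Ω)
    (hu : u ≠ 0)
    (hu3 : LiesIn (2 * 3 ^ (n - 1)) (u ^ 3))
    (hx : ¬ LiesIn (2 * 3 ^ (n - 1)) (u + u⁻¹))
    (hu' : u' ^ 3 = u ^ (2 ^ e)) :
    ¬ LiesIn (2 * 3 ^ n) u' ∧
    ((u' ^ 3) ^ 2 + (u + u⁻¹) ^ (2 ^ e) * u' ^ 3 + 1 = 0 ∧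
      ((u'⁻¹) ^ 3) ^ 2 + (u + u⁻¹) ^ (2 ^ e) * (u'⁻¹) ^ 3 + 1 = 0) ∧
    ((u' + u'⁻¹) ^ 3 + (u' + u'⁻¹) + (u + u⁻¹) ^ (2 ^ e) = 0 ∧
      ¬ LiesIn (2 * 3 ^ n) (u' + u'⁻¹)) := by
  set q := 2 ^ (2 * 3 ^ (n - 1)) with hq
  have hq1 : 1 ≤ q := Nat.one_le_two_pow
  have hq9 : q ≡ 1 [MOD 9] :=
    Nat.two_pow_modEq_one_of_six_dvd ⟨3 ^ (n - 2), by rw [show n - 1 = n - 2 + 1 by omega]; ring⟩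
  have hq3 : 2 ^ (2 * 3 ^ n) = q ^ 3 := by
    rw [hq, ← pow_mul, mul_assoc, ← pow_succ, Nat.sub_add_cancel (by omega)]
  have hu'0 : u' ≠ 0 := by
    rintro rfl
    exact pow_ne_zero _ hu (by rw [← hu', zero_pow three_ne_zero])
  have huq : u ^ q ≠ u := fun h => hx (by rw [LiesIn, add_inv_pow_expChar_pow, h])
  have hu'q : orderOf (u' ^ (q - 1)) = 3 ^ 2 :=
    orderOf_pow_eq_sq_of_pow_prime_eq (orderOf_pow_sub_one_eq_prime hu hq1 hu3 huq)
      (Nat.Coprime.pow_right e (by norm_num)) hu'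
  have hu'qk : ∀ k, u' ^ q ^ k = u' → 3 ^ 2 ∣ k := fun k hk =>
    hu'q ▸ dvd_of_pow_pow_eq_self hu'0 hq1 (by rw [hu'q]; exact hq9) hk
  have hx' : (u + u⁻¹) ^ 2 ^ e = u' ^ 3 + (u' ^ 3)⁻¹ := by rw [add_inv_pow_expChar_pow, hu']
  refine ⟨fun h => ?_, ⟨?_, ?_⟩, ?_, fun h => ?_⟩
  · rw [LiesIn, hq3] at h
    exact absurd (hu'qk 3 h) (by norm_num)
  · rw [hx']
    exact CharTwo.sq_add_add_inv_mul_add_one_eq_zero (pow_ne_zero 3 hu'0)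
  · rw [hx', inv_pow, add_comm (u' ^ 3)]
    simpa using CharTwo.sq_add_add_inv_mul_add_one_eq_zero (inv_ne_zero (pow_ne_zero 3 hu'0))
  · rw [hx']
    exact CharTwo.add_inv_cube_add_add_inv_add_cube_add_inv_eq_zero u'
  · have h6 := pow_expChar_pow_sq_eq_self hu'0 h
    rw [hq3, ← pow_mul] at h6
    exact absurd (hu'qk (3 * 2) h6) (by norm_num)

theorem stmt_17 (e n : ℕ) (hn : 2 ≤ n) (w u u' : Ω)
    (hw : LiesIn (2 * 3 ^ (n - 1)) w)
    (hu : u ≠ 0)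
    (hu3 : LiesIn (2 * 3 ^ (n - 1)) (u ^ 3))
    (hquad : (u ^ 3) ^ 2 + w ^ (2 ^ e) * u ^ 3 + 1 = 0)
    (hx : ¬ LiesIn (2 * 3 ^ (n - 1)) (u + u⁻¹))
    (hu' : u' ^ 3 = u ^ (2 ^ e)) :
    ¬ LiesIn (2 * 3 ^ n) u' ∧
    ((u' ^ 3) ^ 2 + (u + u⁻¹) ^ (2 ^ e) * u' ^ 3 + 1 = 0 ∧
      ((u'⁻¹) ^ 3) ^ 2 + (u + u⁻¹) ^ (2 ^ e) * (u'⁻¹) ^ 3 + 1 = 0) ∧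
    ((u' + u'⁻¹) ^ 3 + (u' + u'⁻¹) + (u + u⁻¹) ^ (2 ^ e) = 0 ∧
      ¬ LiesIn (2 * 3 ^ n) (u' + u'⁻¹)) :=
  stmt_17_general e n hn u u' hu hu3 hx hu'
end

section
/- Let e ≥ 0 and n ≥ 1 be integers and let w ∈ Ω lie in GF(2, 2·3^(n-1)). Suppose that every root of Y³ + Y + w^(2^e) lies in GF(2, 2·3^n), i.e. every z ∈ Ω with z³ + z + w^(2^e) = 0 satisfies z^(2^(2·3^n)) = z. Let x ∈ Ω be any such root, i.e. x³ + x + w^(2^e) = 0. Then every root of Y³ + Y + x^(2^e) lies in GF(2, 2·3^(n+1)), i.e. every z ∈ Ω with z³ + z + x^(2^e) = 0 satisfies z^(2^(2·3^(n+1))) = z. -/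
/-!
Let `K = GF(2^m)` with `m = 2·3^n` and `c = x^(2^e)`. The map `φ = (·)^(2^m)` permutes the roots
of `Y³ + Y + c`, so it suffices to rule out that it fixes exactly one root `t` and swaps the other
two. Those two are the roots of `Y² + tY + t² + 1`, i.e. `t·u` with `u² + u = 1 + t⁻²`, and by
Artin–Schreier such `u` lies in `K` iff the absolute trace of `t⁻¹` vanishes. Since
`t⁻¹ = c⁻¹ + s + s²` with `s = (t + 1)⁻¹ ∈ K`, this trace equals that of `c⁻¹ = (x⁻¹)^(2^e)`,
i.e. that of `x⁻¹`, which vanishes by the same Artin–Schreier argument applied to the roots of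
`Y³ + Y + w^(2^e)`, all of which lie in `K`.
-/

open Finset Polynomial

/-- On `GF(2^m)` this is the absolute trace to `GF(2)`. -/
def absTrace {R : Type*} [CommRing R] (m : ℕ) (a : R) : R := ∑ i ∈ range m, a ^ 2 ^ i

section absTrace

variable {R : Type*} [CommRing R] [CharP R 2] (m : ℕ)

theorem absTrace_add (a b : R) : absTrace m (a + b) = absTrace m a + absTrace m b := by
  simp only [absTrace, add_pow_char_pow, sum_add_distrib]

theorem absTrace_sq_add_self (u : R) : absTrace m (u ^ 2 + u) = u ^ 2 ^ m + u := by
  have h (i : ℕ) : (u ^ 2 + u) ^ 2 ^ i = u ^ 2 ^ (i + 1) - u ^ 2 ^ i := by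
    rw [add_pow_char_pow, CharTwo.sub_eq_add, ← pow_mul, ← pow_succ']
  rw [absTrace, sum_congr rfl fun i _ => h i, sum_range_sub (fun i => u ^ 2 ^ i), pow_zero,
    pow_one, CharTwo.sub_eq_add]

variable {m}

theorem absTrace_sq {a : R} (ha : a ^ 2 ^ m = a) : absTrace m (a ^ 2) = absTrace m a := by
  rw [← CharTwo.add_cancel_right (a ^ 2) a, absTrace_add, absTrace_sq_add_self, ha,
    CharTwo.add_self_eq_zero, zero_add]

theorem absTrace_pow_two_pow {a : R} (ha : a ^ 2 ^ m = a) (e : ℕ) :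
    absTrace m (a ^ 2 ^ e) = absTrace m a := by
  induction e with
  | zero => rw [pow_zero, pow_one]
  | succ e ih => rw [pow_succ, pow_mul, absTrace_sq (by rw [pow_right_comm, ha]), ih]

theorem absTrace_one (hm : Even m) : absTrace m (1 : R) = 0 := by
  simp only [absTrace, one_pow, sum_const, card_range, nsmul_eq_mul, mul_one]
  exact (CharP.cast_eq_zero_iff R 2 m).2 hm.two_dvd

theorem pow_two_pow_eq_self_iff_absTrace_eq_zero {u d : R} (h : u ^ 2 + u = d) :
    u ^ 2 ^ m = u ↔ absTrace m d = 0 := by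
  rw [← h, absTrace_sq_add_self, CharTwo.add_eq_zero]

end absTrace

theorem exists_sq_add_mul_add_eq_zero {F : Type*} [Field F] [IsAlgClosed F] (b c : F) :
    ∃ y : F, y ^ 2 + b * y + c = 0 := by
  obtain ⟨y, hy⟩ := IsAlgClosed.exists_root (C 1 * X ^ 2 + C b * X + C c)
    (by rw [degree_quadratic one_ne_zero]; decide)
  exact ⟨y, by simpa using hy⟩

section cubic

variable {F : Type*} [Field F] {c : F}

theorem sq_add_mul_add_sq_add_one_eq_zero_of_cubic {x y : F} (hx : x ^ 3 + x + c = 0)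
    (hy : y ^ 3 + y + c = 0) (hxy : y ≠ x) : y ^ 2 + x * y + x ^ 2 + 1 = 0 := by
  have h : (y - x) * (y ^ 2 + x * y + x ^ 2 + 1) = 0 := by linear_combination hy - hx
  exact (mul_eq_zero.1 h).resolve_left (sub_ne_zero.2 hxy)

variable [CharP F 2]

theorem cubic_eq_zero_iff_of_roots {z a : F} (hz : z ^ 3 + z + c = 0) (ha : a ^ 3 + a + c = 0)
    (hza : a ≠ z) (b : F) : b ^ 3 + b + c = 0 ↔ b = z ∨ b = a ∨ b = z + a := by
  have hq := sq_add_mul_add_sq_add_one_eq_zero_of_cubic hz ha hza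
  have h : b ^ 3 + b + c = (b - z) * (b - a) * (b - (z + a)) := by
    linear_combination (z - b) * hq - hz +
      (b - b * z * a + b ^ 2 * z + b ^ 2 * a + c) * CharTwo.two_eq_zero (R := F)
  simp only [h, mul_eq_zero, sub_eq_zero, or_assoc]

variable {m : ℕ}

theorem pow_two_pow_eq_self_iff_absTrace_inv (hm : Even m) {x y : F} (hx0 : x ≠ 0)
    (hxK : x ^ 2 ^ m = x) (hxy : y ^ 2 + x * y + x ^ 2 + 1 = 0) :
    y ^ 2 ^ m = y ↔ absTrace m x⁻¹ = 0 := by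
  have hu : (y / x) ^ 2 + y / x = 1 + x⁻¹ ^ 2 := by
    field_simp
    linear_combination hxy - (x ^ 2 + 1) * CharTwo.two_eq_zero (R := F)
  rw [← div_left_inj' hx0, ← hxK, ← div_pow, hxK, pow_two_pow_eq_self_iff_absTrace_eq_zero hu,
    absTrace_add, absTrace_one hm, zero_add, absTrace_sq (by rw [inv_pow, hxK])]

theorem absTrace_inv_eq_zero_of_forall_roots [IsAlgClosed F] (hm : Even m)
    (hsplit : ∀ y : F, y ^ 3 + y + c = 0 → y ^ 2 ^ m = y) {x : F} (hx : x ^ 3 + x + c = 0)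
    (hx0 : x ≠ 0) : absTrace m x⁻¹ = 0 := by
  obtain ⟨y, hy⟩ := exists_sq_add_mul_add_eq_zero x (x ^ 2 + 1)
  have hy' : y ^ 2 + x * y + x ^ 2 + 1 = 0 := by linear_combination hy
  exact (pow_two_pow_eq_self_iff_absTrace_inv hm hx0 (hsplit x hx) hy').1
    (hsplit y (by linear_combination hx + (y - x) * hy'))

theorem absTrace_inv_eq_zero_of_root (hc0 : c ≠ 0) (hTr : absTrace m c⁻¹ = 0) {t : F}
    (ht : t ^ 3 + t + c = 0) (htK : t ^ 2 ^ m = t) : absTrace m t⁻¹ = 0 := by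
  have hc : c = t * (t + 1) ^ 2 := by
    linear_combination ht - (t ^ 3 + t ^ 2 + t) * CharTwo.two_eq_zero (R := F)
  have ht0 : t ≠ 0 := by rintro rfl; simp [hc] at hc0
  have ht1 : t + 1 ≠ 0 := by intro h; simp [hc, h] at hc0
  have hsK : (t + 1)⁻¹ ^ 2 ^ m = (t + 1)⁻¹ := by
    rw [inv_pow, add_pow_char_pow, htK, one_pow]
  have hid : t⁻¹ = c⁻¹ + ((t + 1)⁻¹ ^ 2 + (t + 1)⁻¹) := by
    rw [hc]
    field_simp
    ring
  rw [hid, absTrace_add, absTrace_sq_add_self, hsK, CharTwo.add_self_eq_zero, hTr, add_zero]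

theorem pow_two_pow_eq_self_of_root (hm : Even m) (hc0 : c ≠ 0) (hTr : absTrace m c⁻¹ = 0)
    {t : F} (ht : t ^ 3 + t + c = 0) (htK : t ^ 2 ^ m = t) {z : F} (hz : z ^ 3 + z + c = 0) :
    z ^ 2 ^ m = z := by
  rcases eq_or_ne z t with rfl | hzt
  · exact htK
  have ht0 : t ≠ 0 := by rintro rfl; exact hc0 (by simpa using ht)
  exact (pow_two_pow_eq_self_iff_absTrace_inv hm ht0 htK
    (sq_add_mul_add_sq_add_one_eq_zero_of_cubic ht hz hzt)).2
    (absTrace_inv_eq_zero_of_root hc0 hTr ht htK)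

theorem pow_two_pow_three_mul_eq_self (hm : Even m) (hc0 : c ≠ 0) (hcK : c ^ 2 ^ m = c)
    (hTr : absTrace m c⁻¹ = 0) {z : F} (hz : z ^ 3 + z + c = 0) : z ^ 2 ^ (3 * m) = z := by
  set φ := iterateFrobenius F 2 m
  have hφ (y : F) : φ y = y ^ 2 ^ m := rfl
  have hroot {y : F} (hy : y ^ 3 + y + c = 0) : φ y ^ 3 + φ y + c = 0 := by
    simpa only [map_add, map_pow, map_zero, hφ c, hcK] using congrArg φ hy
  suffices φ (φ (φ z)) = z by
    rwa [show 3 * m = m + m + m by ring, pow_add, pow_add, pow_mul, pow_mul]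
  by_cases hzK : φ z = z
  · rw [hzK, hzK, hzK]
  have hroots := cubic_eq_zero_iff_of_roots hz (hroot hz) hzK
  rcases (hroots _).1 (hroot (hroot hz)) with hbz | hba | hbza
  · have ht := (hroots (z + φ z)).2 (Or.inr (Or.inr rfl))
    have htK : (z + φ z) ^ 2 ^ m = z + φ z := by rw [← hφ, map_add, hbz, add_comm]
    exact absurd (pow_two_pow_eq_self_of_root hm hc0 hTr ht htK hz) hzK
  · exact absurd (φ.injective hba) hzK
  · rw [hbza, map_add, hbza, add_left_comm, CharTwo.add_self_eq_zero, add_zero]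

theorem pow_two_pow_eq_self_of_pow_three_add_self_eq_zero {z : F} (hz : z ^ 3 + z = 0) (k : ℕ) :
    z ^ 2 ^ k = z := by
  have h : z * (z + 1) ^ 2 = 0 := by
    linear_combination hz + z ^ 2 * CharTwo.two_eq_zero (R := F)
  rcases mul_eq_zero.1 h with rfl | h1
  · exact zero_pow (by positivity)
  · rw [CharTwo.add_eq_zero.1 (pow_eq_zero_iff two_ne_zero |>.1 h1), one_pow]

end cubic

theorem stmt_18_general (e n : ℕ) (w : Ω)
    (hsplit : ∀ z : Ω, z ^ 3 + z + w ^ (2 ^ e) = 0 → LiesIn (2 * 3 ^ n) z)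
    (x : Ω) (hx : x ^ 3 + x + w ^ (2 ^ e) = 0) :
    ∀ z : Ω, z ^ 3 + z + x ^ (2 ^ e) = 0 → LiesIn (2 * 3 ^ (n + 1)) z := by
  intro z hz
  have hm : Even (2 * 3 ^ n) := even_two_mul _
  rw [LiesIn, show 2 * 3 ^ (n + 1) = 3 * (2 * 3 ^ n) by ring]
  rcases eq_or_ne x 0 with rfl | hx0
  · exact pow_two_pow_eq_self_of_pow_three_add_self_eq_zero (by simpa using hz) _
  have hxK : x ^ 2 ^ (2 * 3 ^ n) = x := hsplit x hx
  refine pow_two_pow_three_mul_eq_self hm (pow_ne_zero _ hx0) (by rw [pow_right_comm, hxK]) ?_ hz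
  rw [← inv_pow, absTrace_pow_two_pow (by rw [inv_pow, hxK])]
  exact absTrace_inv_eq_zero_of_forall_roots hm hsplit hx hx0

theorem stmt_18 (e n : ℕ) (hn : 1 ≤ n) (w : Ω)
    (hw : LiesIn (2 * 3 ^ (n - 1)) w)
    (hsplit : ∀ z : Ω, z ^ 3 + z + w ^ (2 ^ e) = 0 → LiesIn (2 * 3 ^ n) z)
    (x : Ω) (hx : x ^ 3 + x + w ^ (2 ^ e) = 0) :
    ∀ z : Ω, z ^ 3 + z + x ^ (2 ^ e) = 0 → LiesIn (2 * 3 ^ (n + 1)) z :=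
  stmt_18_general e n w hsplit x hx
end
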